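/- arXiv:1211.2558 — 2 statements merged into one kernel-verified Lean document; each statement's English description precedes it below -/
import Mathlib

section
/- Let G be a finite connected bipartite graph with bipartition (U, W). If G is elementary (every edge lies in some perfect matching and G is connected) and G has at least four vertices, then |U| = |W| and for every nonempty proper subset X of U, the neighborhood satisfies |N(X)| ≥ |X| + 1. -/
/-! Take a perfect matching `M` through an edge `w u` with `w ∈ N(X)` and `u ∉ X`; such an edge
exists by connectivity, since otherwise `X ∪ N(X)` would be a union of components. Sending each
vertex to its `M`-partner maps `X` injectively into `N(X)`, and it misses `w`, whose partner is
`u ∉ X`. Hence `|X| < |N(X)|`. The same partner involution swaps `U` and `W`, so `|U| = |W|`. -/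

namespace SimpleGraph

variable {V : Type*} {G : SimpleGraph V}

def neighborsIn (G : SimpleGraph V) [DecidableRel G.Adj] (W X : Finset V) : Finset V :=
  W.filter fun w => ∃ x ∈ X, G.Adj x w

lemma mem_of_adj_of_mem_of_disjoint {U W : Finset V} (hUW : Disjoint U W)
    (hbip : ∀ a b : V, G.Adj a b → (a ∈ U ∧ b ∈ W) ∨ (a ∈ W ∧ b ∈ U))
    {a b : V} (ha : a ∈ U) (hab : G.Adj a b) : b ∈ W := by
  rcases hbip a b hab with ⟨-, hb⟩ | ⟨haW, -⟩
  · exact hb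
  · exact absurd haW (Finset.disjoint_left.mp hUW ha)

lemma Preconnected.exists_adj_neighborsIn_notMem [DecidableRel G.Adj] (hconn : G.Preconnected)
    {W X : Finset V} (hXW : ∀ x ∈ X, ∀ y, G.Adj x y → y ∈ W) {x₀ u₀ : V} (hx₀ : x₀ ∈ X)
    (hu₀X : u₀ ∉ X) (hu₀W : u₀ ∉ W) :
    ∃ w ∈ G.neighborsIn W X, ∃ u ∉ X, G.Adj w u := by
  obtain ⟨p⟩ := hconn x₀ u₀
  have hu₀ : u₀ ∉ {v | v ∈ X ∨ v ∈ G.neighborsIn W X} := by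
    rintro (h | h)
    exacts [hu₀X h, hu₀W (Finset.mem_filter.mp h).1]
  obtain ⟨d, -, hd_fst, hd_snd⟩ := p.exists_boundary_dart _ (Or.inl hx₀) hu₀
  have hd_snd_X : d.snd ∉ X := fun h => hd_snd (Or.inl h)
  rcases hd_fst with hX | hN
  · exact absurd (Or.inr (Finset.mem_filter.mpr ⟨hXW _ hX _ d.adj, _, hX, d.adj⟩)) hd_snd
  · exact ⟨d.fst, hN, d.snd, hd_snd_X, d.adj⟩

namespace Subgraph.IsPerfectMatching

variable {M : G.Subgraph} (hM : M.IsPerfectMatching)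
include hM

noncomputable def partner (v : V) : V :=
  (isPerfectMatching_iff.mp hM v).exists.choose

lemma adj_partner (v : V) : M.Adj v (hM.partner v) :=
  (isPerfectMatching_iff.mp hM v).exists.choose_spec

lemma partner_eq_of_adj {v w : V} (h : M.Adj v w) : hM.partner v = w :=
  (isPerfectMatching_iff.mp hM v).unique (hM.adj_partner v) h

lemma partner_partner (v : V) : hM.partner (hM.partner v) = v :=
  hM.partner_eq_of_adj (hM.adj_partner v).symm

lemma card_eq_card {U W : Finset V} (hUW : ∀ u ∈ U, ∀ w, G.Adj u w → w ∈ W)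
    (hWU : ∀ w ∈ W, ∀ u, G.Adj w u → u ∈ U) : U.card = W.card :=
  Finset.card_nbij' hM.partner hM.partner
    (fun u hu => hUW u hu _ (M.adj_sub (hM.adj_partner u)))
    (fun w hw => hWU w hw _ (M.adj_sub (hM.adj_partner w)))
    (fun v _ => hM.partner_partner v) (fun v _ => hM.partner_partner v)

lemma card_add_one_le_card_neighborsIn [DecidableRel G.Adj] [DecidableEq V] {W X : Finset V}
    (hXW : ∀ x ∈ X, ∀ y, G.Adj x y → y ∈ W) {w u : V} (hw : w ∈ G.neighborsIn W X)
    (hu : u ∉ X) (hwu : M.Adj w u) :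
    X.card + 1 ≤ (G.neighborsIn W X).card := by
  have hmaps : Set.MapsTo hM.partner X ((G.neighborsIn W X).erase w) := by
    intro x hx
    have hadj : G.Adj x (hM.partner x) := M.adj_sub (hM.adj_partner x)
    refine Finset.mem_erase.mpr ⟨fun hxw => ?_, Finset.mem_filter.mpr ⟨hXW x hx _ hadj, x, hx, hadj⟩⟩
    have : u = x := by
      rw [← hM.partner_eq_of_adj hwu, ← hxw, hM.partner_partner]
    exact hu (this ▸ hx)
  have hinj : Set.InjOn hM.partner X := fun x _ y _ h => by
    rw [← hM.partner_partner x, h, hM.partner_partner]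
  calc X.card + 1 ≤ ((G.neighborsIn W X).erase w).card + 1 :=
        Nat.add_le_add_right (Finset.card_le_card_of_injOn _ hmaps hinj) 1
    _ = (G.neighborsIn W X).card := Finset.card_erase_add_one hw

end Subgraph.IsPerfectMatching

end SimpleGraph

open SimpleGraph in
theorem elementary_surplus_general {V : Type*} [Fintype V]
    (G : SimpleGraph V) [DecidableRel G.Adj] (U W : Finset V)
    (hpart : ∀ v : V, (v ∈ U ∧ v ∉ W) ∨ (v ∈ W ∧ v ∉ U))
    (hbip : ∀ a b : V, G.Adj a b → (a ∈ U ∧ b ∈ W) ∨ (a ∈ W ∧ b ∈ U))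
    (hconn : G.Connected)
    (hext : ∀ e ∈ G.edgeSet, ∃ M : G.Subgraph, M.IsPerfectMatching ∧ e ∈ M.edgeSet)
    (hcard : 4 ≤ Fintype.card V) :
    U.card = W.card
      ∧ ∀ X ⊆ U, X.Nonempty → X ≠ U →
          X.card + 1 ≤ (W.filter (fun w => ∃ x ∈ X, G.Adj x w)).card := by
  classical
  have hUW : Disjoint U W :=
    Finset.disjoint_left.mpr fun v hU hW => by rcases hpart v with h | h <;> tauto
  have hUW_adj : ∀ u ∈ U, ∀ w, G.Adj u w → w ∈ W := fun _ hu _ =>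
    mem_of_adj_of_mem_of_disjoint hUW hbip hu
  have hWU_adj : ∀ w ∈ W, ∀ u, G.Adj w u → u ∈ U := fun _ hw _ =>
    mem_of_adj_of_mem_of_disjoint hUW.symm (fun a b hab => (hbip a b hab).symm) hw
  have : Nontrivial V := Fintype.one_lt_card_iff_nontrivial.mp (by omega)
  obtain ⟨v, hv⟩ := hconn.preconnected.exists_adj_of_nontrivial (Classical.arbitrary V)
  obtain ⟨M₀, hM₀, -⟩ := hext s(_, v) hv
  refine ⟨hM₀.card_eq_card hUW_adj hWU_adj, fun X hXU ⟨x₀, hx₀⟩ hXne => ?_⟩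
  have hXW : ∀ x ∈ X, ∀ y, G.Adj x y → y ∈ W := fun x hx => hUW_adj x (hXU hx)
  obtain ⟨u₀, hu₀U, hu₀X⟩ := Finset.exists_of_ssubset (hXU.ssubset_of_ne hXne)
  obtain ⟨w, hw, u, hu, hwu⟩ := hconn.preconnected.exists_adj_neighborsIn_notMem hXW hx₀ hu₀X
    (Finset.disjoint_left.mp hUW hu₀U)
  obtain ⟨M, hM, hwuM⟩ := hext s(w, u) hwu
  exact hM.card_add_one_le_card_neighborsIn hXW hw hu hwuM

/-- Lovász–Plummer (1)⇒(3): a finite connected elementary bipartite graph (every edge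
lies in some perfect matching) with bipartition `(U, W)` and at least four vertices
satisfies `|U| = |W|` and has the surplus property: every nonempty proper subset
`X ⊆ U` has `|N(X)| ≥ |X| + 1`. -/
theorem elementary_surplus {V : Type*} [Fintype V] [DecidableEq V]
    (G : SimpleGraph V) [DecidableRel G.Adj] (U W : Finset V)
    (hpart : ∀ v : V, (v ∈ U ∧ v ∉ W) ∨ (v ∈ W ∧ v ∉ U))
    (hbip : ∀ a b : V, G.Adj a b → (a ∈ U ∧ b ∈ W) ∨ (a ∈ W ∧ b ∈ U))
    (hconn : G.Connected)
    (hext : ∀ e ∈ G.edgeSet, ∃ M : G.Subgraph, M.IsPerfectMatching ∧ e ∈ M.edgeSet)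
    (hcard : 4 ≤ Fintype.card V) :
    U.card = W.card
      ∧ ∀ X ⊆ U, X.Nonempty → X ≠ U →
          X.card + 1 ≤ (W.filter (fun w => ∃ x ∈ X, G.Adj x w)).card :=
  elementary_surplus_general G U W hpart hbip hconn hext hcard
end

section
/- Let G be a finite bipartite graph with bipartition (U, W) and |U| = |W| ≥ 2. If for every nonempty proper subset X of U we have |N(X)| ≥ |X| + 1, then for every choice of u ∈ U and w ∈ W, the graph G − {u, w} has a perfect matching. -/
/-!
Deleting `w` removes at most one vertex from each neighbourhood, so the surplus condition leaves
Hall's condition for matching `U \ {u}` into `W \ {w}`. Both sides have the same size, so the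
matching Hall's theorem provides is perfect.
-/

open Finset

namespace Finset

variable {α β : Type*} {r : α → β → Prop} [DecidableRel r] {s : Finset α} {t : Finset β}

theorem exists_equiv_of_card_eq_of_forall_card_le_card_filter [DecidableEq β] (hcard : #s = #t)
    (hall : ∀ X ⊆ s, #X ≤ #{b ∈ t | ∃ a ∈ X, r a b}) :
    ∃ e : s ≃ t, ∀ a : s, r a (e a) := by
  obtain ⟨f, hf_inj, hf_mem⟩ :=
    (all_card_le_biUnion_card_iff_exists_injective fun a : s ↦ {b ∈ t | r a b}).mp fun A ↦ by
      convert hall (A.map (.subtype _)) (fun _ ↦ by simp +contextual) using 2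
      · exact (card_map _).symm
      · ext
        simp only [mem_biUnion, mem_filter, Subtype.exists, exists_and_right, mem_map,
          Function.Embedding.subtype_apply, exists_eq_right]
        tauto
  let g (a : s) : t := ⟨f a, (mem_filter.mp (hf_mem a)).1⟩
  have hg : Function.Bijective g :=
    (Fintype.bijective_iff_injective_and_card g).mpr
      ⟨fun a a' h ↦ hf_inj (congrArg Subtype.val h), by simpa using hcard⟩
  exact ⟨.ofBijective g hg, fun a ↦ (mem_filter.mp (hf_mem a)).2⟩

theorem card_le_card_filter_erase_of_surplus [DecidableEq α] [DecidableEq β] {a₀ : α}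
    (ha₀ : a₀ ∈ s) (b₀ : β)
    (hsurplus : ∀ X ⊆ s, X.Nonempty → X ≠ s → #X + 1 ≤ #{b ∈ t | ∃ a ∈ X, r a b}) :
    ∀ X ⊆ s.erase a₀, #X ≤ #{b ∈ t.erase b₀ | ∃ a ∈ X, r a b} := by
  intro X hX
  obtain rfl | hX_ne := X.eq_empty_or_nonempty
  · simp
  have hX_ne_s : X ≠ s := fun h ↦ notMem_erase a₀ s (hX (h ▸ ha₀))
  calc #X ≤ #{b ∈ t | ∃ a ∈ X, r a b} - 1 := by
        have := hsurplus X (hX.trans (erase_subset _ _)) hX_ne hX_ne_s; omega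
    _ ≤ #{b ∈ t.erase b₀ | ∃ a ∈ X, r a b} := by rw [filter_erase]; exact pred_card_le_card_erase

end Finset

namespace SimpleGraph.Subgraph

variable {V : Type*} {G : SimpleGraph V} {M : G.Subgraph}

theorem IsMatching.exists_isPerfectMatching_induce (hM : M.IsMatching) :
    ∃ M' : (G.induce M.verts).Subgraph, M'.IsPerfectMatching := by
  let M' : (G.induce M.verts).Subgraph :=
    { verts := .univ
      Adj a b := M.Adj a b
      adj_sub h := M.adj_sub h
      edge_vert _ := trivial
      symm := ⟨fun _ _ h ↦ h.symm⟩ }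
  refine ⟨M', isPerfectMatching_iff.mpr fun v ↦ ?_⟩
  obtain ⟨w, hvw, hw_unique⟩ := hM v.2
  exact ⟨⟨w, M.edge_vert hvw.symm⟩, hvw, fun w' hvw' ↦ Subtype.ext (hw_unique _ hvw')⟩

end SimpleGraph.Subgraph

theorem surplus_implies_deleted_matching_general {V : Type*}
    (G : SimpleGraph V) [DecidableRel G.Adj] (U W : Finset V)
    (hpart : ∀ v : V, (v ∈ U ∧ v ∉ W) ∨ (v ∈ W ∧ v ∉ U))
    (hUW : U.card = W.card)
    (hsurplus : ∀ X ⊆ U, X.Nonempty → X ≠ U →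
        X.card + 1 ≤ (W.filter (fun w => ∃ x ∈ X, G.Adj x w)).card) :
    ∀ u ∈ U, ∀ w ∈ W,
      ∃ M : (G.induce {x : V | x ≠ u ∧ x ≠ w}).Subgraph, M.IsPerfectMatching := by
  classical
  intro u hu w hw
  have hsplit : {x : V | x ≠ u ∧ x ≠ w} = ↑(U.erase u) ∪ ↑(W.erase w) := by
    ext v
    rcases hpart v with ⟨hvU, hvW⟩ | ⟨hvW, hvU⟩
    · simp [hvU, hvW, (ne_of_mem_of_not_mem hw hvW).symm]
    · simp [hvU, hvW, (ne_of_mem_of_not_mem hu hvU).symm]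
  have hdisj : Disjoint (U.erase u : Set V) (W.erase w) := by
    refine disjoint_coe.mpr (Disjoint.mono (erase_subset _ _) (erase_subset _ _) ?_)
    exact disjoint_left.mpr fun v hvU hvW ↦ by rcases hpart v with h | h <;> tauto
  obtain ⟨e, he⟩ := exists_equiv_of_card_eq_of_forall_card_le_card_filter
    (by rw [card_erase_of_mem hu, card_erase_of_mem hw, hUW] : #(U.erase u) = #(W.erase w))
    (card_le_card_filter_erase_of_surplus hu w hsurplus)
  obtain ⟨M, hM_verts, hM⟩ :=
    SimpleGraph.Subgraph.IsMatching.exists_of_disjoint_sets_of_equiv hdisj e he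
  rw [hsplit, ← hM_verts]
  exact hM.exists_isPerfectMatching_induce

/-- Lovász–Plummer (3)⇒(4): if a finite bipartite graph with bipartition `(U, W)`,
`|U| = |W| ≥ 2`, has the surplus property (`|N(X)| ≥ |X| + 1` for every nonempty proper
`X ⊆ U`), then for every `u ∈ U` and `w ∈ W` the graph with `u` and `w` deleted has a
perfect matching. -/
theorem surplus_implies_deleted_matching {V : Type*} [Fintype V] [DecidableEq V]
    (G : SimpleGraph V) [DecidableRel G.Adj] (U W : Finset V)
    (hpart : ∀ v : V, (v ∈ U ∧ v ∉ W) ∨ (v ∈ W ∧ v ∉ U))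
    (hbip : ∀ a b : V, G.Adj a b → (a ∈ U ∧ b ∈ W) ∨ (a ∈ W ∧ b ∈ U))
    (hUW : U.card = W.card) (hU2 : 2 ≤ U.card)
    (hsurplus : ∀ X ⊆ U, X.Nonempty → X ≠ U →
        X.card + 1 ≤ (W.filter (fun w => ∃ x ∈ X, G.Adj x w)).card) :
    ∀ u ∈ U, ∀ w ∈ W,
      ∃ M : (G.induce {x : V | x ≠ u ∧ x ≠ w}).Subgraph, M.IsPerfectMatching :=
  surplus_implies_deleted_matching_general G U W hpart hUW hsurplus
end
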